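/- Let L ≥ 1, let H be a Hermitian 2L×2L matrix on the finite chain Hilbert space ℂ^{2L} with chiral symmetry HC + CH = 0, let δ > 0, S = tanh(H/δ), and let θ : {0,…,L−1} → ℝ be any switch function. Then the finite-size bulk and edge indices coincide: ½·Tr(C·S·[θ(X),S]) = Tr(C·θ(X)·(1−S²)). -/

import Mathlib

/-!
Since `H` anticommutes with `C` and `tanh` is odd, `S = tanh (H/δ)` anticommutes with `C`, while
`θ(X)` commutes with `C`. Cyclicity of the trace then turns both terms of `½ Tr (C S [θ(X), S])`
into `-½ Tr (C θ(X) S²)`, and `Tr (C θ(X)) = 0` because `C` is traceless on every site.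
-/

open MeasureTheory
open scoped ComplexOrder

noncomputable section

namespace Chiral

/-- The ℓ²-operator norm of a square complex matrix. -/
def opNorm {n : Type*} [Fintype n] [DecidableEq n] (T : Matrix n n ℂ) : ℝ :=
  ‖Matrix.toEuclideanCLM (𝕜 := ℂ) T‖

/-- The trace norm `Tr √(T*T)` of a square complex matrix. -/
def traceNorm {n : Type*} [Fintype n] [DecidableEq n] (T : Matrix n n ℂ) : ℝ :=
  (((Matrix.posSemidef_conjTranspose_mul_self T).1.eigenvectorUnitary : Matrix n n ℂ) *
      Matrix.diagonal (((↑) : ℝ → ℂ) ∘ Real.sqrt ∘ (Matrix.posSemidef_conjTranspose_mul_self T).1.eigenvalues) *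
      star ((Matrix.posSemidef_conjTranspose_mul_self T).1.eigenvectorUnitary : Matrix n n ℂ)).trace.re

open Classical in
/-- Functional calculus of a Hermitian matrix: same eigenvectors, eigenvalue `E`
replaced by `f E`.  (Junk value `0` if the matrix is not Hermitian.) -/
def matFun {n : Type*} [Fintype n] [DecidableEq n] (f : ℝ → ℂ) (H : Matrix n n ℂ) :
    Matrix n n ℂ :=
  if hH : H.IsHermitian then
    (hH.eigenvectorUnitary : Matrix n n ℂ) *
      Matrix.diagonal (fun i => f (hH.eigenvalues i)) *
      star (hH.eigenvectorUnitary : Matrix n n ℂ)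
  else 0

/-- The matrix exponential. -/
def matExp {n : Type*} [Fintype n] [DecidableEq n] (M : Matrix n n ℂ) : Matrix n n ℂ :=
  NormedSpace.exp M

/-- `S = tanh (H/δ)` by functional calculus. -/
def tanhOf {n : Type*} [Fintype n] [DecidableEq n] (δ : ℝ) (H : Matrix n n ℂ) :
    Matrix n n ℂ :=
  matFun (fun E => (Real.tanh (E / δ) : ℂ)) H

/-- Index set of the finite chain of length `L` with two internal degrees of freedom. -/
abbrev Site (L : ℕ) := Fin L × Fin 2

/-- The `2×2` block of a matrix on the chain corresponding to sites `x, y`. -/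
def matBlock {L : ℕ} (T : Matrix (Site L) (Site L) ℂ) (x y : Fin L) :
    Matrix (Fin 2) (Fin 2) ℂ :=
  Matrix.of fun s s' => T (x, s) (y, s')

/-- A finite Hamiltonian is short range with parameters `d`, `K`. -/
def FinShortRange {L : ℕ} (H : Matrix (Site L) (Site L) ℂ) (d K : ℝ) : Prop :=
  ∀ x : Fin L, ∑ y : Fin L,
    opNorm (matBlock H x y) * Real.exp (|((x : ℕ) : ℝ) - ((y : ℕ) : ℝ)| / d) ≤ K

/-- The chiral operator `C` on the finite chain: `+1` on the `A` component,
`-1` on the `B` component. -/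
def chiralC (L : ℕ) : Matrix (Site L) (Site L) ℂ :=
  Matrix.diagonal fun p => if p.2 = 0 then 1 else -1

/-- The diagonal matrix `θ(X)` associated to a switch function `θ`. -/
def switchX {L : ℕ} (θ : Fin L → ℝ) : Matrix (Site L) (Site L) ℂ :=
  Matrix.diagonal fun p => (θ p.1 : ℂ)

/-- The standard switch function: `1` on the left half (`x < L/2`), `0` on the right half. -/
def midSwitch (L : ℕ) : Fin L → ℝ := fun x => if ((x : ℕ) : ℝ) < (L : ℝ) / 2 then 1 else 0

/-- The edge index `Tr (C θ(X) (1 - S²))`. -/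
def edgeIndex {L : ℕ} (θ : Fin L → ℝ) (S : Matrix (Site L) (Site L) ℂ) : ℂ :=
  Matrix.trace (chiralC L * switchX θ * (1 - S * S))

/-- The bulk index `½ Tr (C S [θ(X), S])`. -/
def bulkIndex {L : ℕ} (θ : Fin L → ℝ) (S : Matrix (Site L) (Site L) ℂ) : ℂ :=
  (1 / 2 : ℂ) * Matrix.trace (chiralC L * S * (switchX θ * S - S * switchX θ))

/-- The bulk Hilbert space `ℓ²(ℤ; ℂ²)`. -/
abbrev BulkSpace := lp (fun _ : ℤ => EuclideanSpace ℂ (Fin 2)) 2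

/-- Bounded operators on the bulk Hilbert space. -/
abbrev BulkOp := BulkSpace →L[ℂ] BulkSpace

/-- The canonical basis vector at site `x` with internal index `s`. -/
def bvec (x : ℤ) (s : Fin 2) : BulkSpace := lp.single 2 x (EuclideanSpace.single s 1)

/-- The `2×2` block `T_{x,y}` of a bulk operator. -/
def bulkBlock (T : BulkOp) (x y : ℤ) : Matrix (Fin 2) (Fin 2) ℂ :=
  Matrix.of fun s s' => (inner ℂ (bvec x s) (T (bvec y s')) : ℂ)

/-- A bulk Hamiltonian is short range with parameters `d`, `K`:
`sup_x ∑_y ‖T_{x,y}‖ e^{|x-y|/d} ≤ K`. -/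
def BulkShortRange (T : BulkOp) (d K : ℝ) : Prop :=
  ∀ x : ℤ,
    Summable (fun y : ℤ => opNorm (bulkBlock T x y) * Real.exp (|((x : ℝ)) - ((y : ℝ))| / d)) ∧
    ∑' y : ℤ, opNorm (bulkBlock T x y) * Real.exp (|((x : ℝ)) - ((y : ℝ))| / d) ≤ K

/-- The spectrum of `T` does not meet the open interval `(-Δ, Δ)`. -/
def HasGap (T : BulkOp) (Δ : ℝ) : Prop :=
  ∀ r : ℝ, |r| < Δ → (r : ℂ) ∉ spectrum ℂ T

/-- The on-site chiral matrix `diag(1, -1)`. -/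
def c2 : Matrix (Fin 2) (Fin 2) ℂ := Matrix.diagonal fun s => if s = 0 then 1 else -1

/-- A bulk operator is chiral: it anticommutes with the bulk chiral operator
(expressed blockwise, which is equivalent). -/
def ChiralBulk (T : BulkOp) : Prop :=
  ∀ x y : ℤ, c2 * bulkBlock T x y + bulkBlock T x y * c2 = 0

/-- The restriction `ι* T ι` of a bulk operator to the finite open chain of length `L`. -/
def restrict (L : ℕ) (T : BulkOp) : Matrix (Site L) (Site L) ℂ :=
  Matrix.of fun p q => bulkBlock T ((p.1 : ℕ) : ℤ) ((q.1 : ℕ) : ℤ) p.2 q.2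

section OddFunctionalCalculus

variable {A : Type*} [Ring A] [StarRing A] [TopologicalSpace A] [IsTopologicalRing A]
  [Algebra ℝ A] [ContinuousFunctionalCalculus ℝ A IsSelfAdjoint] [ContinuousMap.UniqueHom ℝ A]

/-- Conjugation by `u` is a star-algebra automorphism sending `a` to `-a`; it commutes with the
functional calculus, and `f (-a) = -f a` for odd `f`. -/
theorem _root_.cfc_anticommute_of_odd {u : A} (hu : u ∈ unitary A) {a : A} (ha : IsSelfAdjoint a)
    (hua : u * a = -(a * u)) {f : ℝ → ℝ} (hf : Function.Odd f) (hfc : Continuous f) :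
    u * cfc f a = -(cfc f a * u) := by
  set v : unitary A := ⟨u, hu⟩
  have hconj : Unitary.conjStarAlgAut ℝ A v a = -a := by
    simp [v, hua, mul_assoc, Unitary.mul_star_self_of_mem hu]
  have hcont : Continuous (Unitary.conjStarAlgAut ℝ A v) := by
    have : ⇑(Unitary.conjStarAlgAut ℝ A v) = fun x => u * x * star u := by
      ext x; exact Unitary.conjStarAlgAut_apply v x
    rw [this]; fun_prop
  have hconj_cfc : u * cfc f a * star u = -cfc f a := by
    rw [← Unitary.conjStarAlgAut_apply (S := ℝ) v, StarAlgHomClass.map_cfc _ f a (S := ℝ), hconj,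
      ← cfc_comp_neg f a]
    simp only [hf _]
    exact cfc_neg f a
  calc u * cfc f a = u * cfc f a * star u * u := by
        rw [mul_assoc _ (star u), Unitary.star_mul_self_of_mem hu, mul_one]
    _ = -(cfc f a * u) := by rw [hconj_cfc, neg_mul]

end OddFunctionalCalculus

theorem matFun_ofReal_eq_cfc {n : Type*} [Fintype n] [DecidableEq n] {H : Matrix n n ℂ}
    (hH : H.IsHermitian) (f : ℝ → ℝ) : matFun (fun E => (f E : ℂ)) H = cfc f H := by
  rw [matFun, dif_pos hH, hH.cfc_eq, Matrix.IsHermitian.cfc, Unitary.conjStarAlgAut_apply]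
  rfl

theorem _root_.Matrix.trace_mul_mul_commutator_of_anticommute {n R : Type*} [Fintype n] [CommRing R]
    {C S T : Matrix n n R} (hCS : C * S = -(S * C)) (hCT : C * T = T * C) :
    (C * S * (T * S - S * T)).trace = -2 * (C * T * (S * S)).trace := by
  have hCSTS : (C * S * (T * S)).trace = -(C * T * (S * S)).trace := by
    calc (C * S * (T * S)).trace = (S * C * (S * T)).trace := by
          rw [← Matrix.mul_assoc, Matrix.trace_mul_comm, Matrix.mul_assoc, Matrix.mul_assoc]
      _ = -(C * T * (S * S)).trace := by
          rw [← neg_neg (S * C), ← hCS, Matrix.neg_mul, Matrix.trace_neg, ← Matrix.mul_assoc,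
            Matrix.trace_mul_comm, ← Matrix.mul_assoc, ← Matrix.mul_assoc, ← hCT, Matrix.mul_assoc]
  have hCSST : (C * S * (S * T)).trace = (C * T * (S * S)).trace := by
    rw [← Matrix.mul_assoc, Matrix.trace_mul_comm, ← Matrix.mul_assoc, ← Matrix.mul_assoc, ← hCT]
    simp only [Matrix.mul_assoc]
  rw [Matrix.mul_sub, Matrix.trace_sub, hCSTS, hCSST]
  ring

theorem _root_.Real.continuous_tanh : Continuous Real.tanh := by
  rw [show Real.tanh = fun x => Real.sinh x / Real.cosh x from
    funext fun x => Real.tanh_eq_sinh_div_cosh x]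
  exact Real.continuous_sinh.div Real.continuous_cosh fun x => (Real.cosh_pos x).ne'

theorem chiralC_mem_unitary (L : ℕ) : chiralC L ∈ unitary (Matrix (Site L) (Site L) ℂ) := by
  rw [← Matrix.unitaryGroup, Matrix.mem_unitaryGroup_iff, chiralC, Matrix.star_eq_conjTranspose,
    Matrix.diagonal_conjTranspose, Matrix.diagonal_mul_diagonal, ← Matrix.diagonal_one]
  congr 1
  funext p
  by_cases h : p.2 = 0 <;> simp [h]

theorem chiralC_mul_switchX {L : ℕ} (θ : Fin L → ℝ) :
    chiralC L * switchX θ = switchX θ * chiralC L := by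
  simp only [switchX, chiralC, Matrix.diagonal_mul_diagonal, mul_comm]

theorem trace_chiralC_mul_switchX {L : ℕ} (θ : Fin L → ℝ) :
    (chiralC L * switchX θ).trace = 0 := by
  simp [chiralC, switchX, Matrix.trace_diagonal, Fintype.sum_prod_type, Fin.sum_univ_two]

theorem chiralC_mul_tanhOf {L : ℕ} {H : Matrix (Site L) (Site L) ℂ} (hH : H.IsHermitian)
    (hchiral : H * chiralC L + chiralC L * H = 0) (δ : ℝ) :
    chiralC L * tanhOf δ H = -(tanhOf δ H * chiralC L) := by
  rw [tanhOf, matFun_ofReal_eq_cfc hH]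
  have hCH : chiralC L * H = -(H * chiralC L) :=
    eq_neg_of_add_eq_zero_left ((add_comm _ _).trans hchiral)
  refine cfc_anticommute_of_odd (chiralC_mem_unitary L) hH.isSelfAdjoint hCH (fun E => ?_)
    (Real.continuous_tanh.comp (continuous_id.div_const δ))
  simp [neg_div]

theorem stmt2_general (L : ℕ)
    (H : Matrix (Site L) (Site L) ℂ) (hH : H.IsHermitian)
    (hchiral : H * chiralC L + chiralC L * H = 0)
    (δ : ℝ) (θ : Fin L → ℝ) :
    bulkIndex θ (tanhOf δ H) = edgeIndex θ (tanhOf δ H) := by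
  rw [bulkIndex, edgeIndex, Matrix.trace_mul_mul_commutator_of_anticommute
    (chiralC_mul_tanhOf hH hchiral δ) (chiralC_mul_switchX θ), Matrix.mul_sub, Matrix.mul_one,
    Matrix.trace_sub, trace_chiralC_mul_switchX]
  ring

theorem stmt2 (L : ℕ) (hL : 1 ≤ L)
    (H : Matrix (Site L) (Site L) ℂ) (hH : H.IsHermitian)
    (hchiral : H * chiralC L + chiralC L * H = 0)
    (δ : ℝ) (hδ : 0 < δ) (θ : Fin L → ℝ) :
    bulkIndex θ (tanhOf δ H) = edgeIndex θ (tanhOf δ H) :=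
  stmt2_general L H hH hchiral δ θ

end Chiral

end
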